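/- For all 0<q<1 and every integer n≥2, writing H=⌊n/2⌋, the offset satisfies b_n(q) ≥ 2κ(q)·Σ_{k=0}^{H−1}(λ_k(q) − κ(q)); consequently the limit b(q)=lim_{n→∞} b_n(q) satisfies b(q) ≥ 2κ(q)·Σ_{k=0}^{∞}(λ_k(q) − κ(q)). -/

import Mathlib

/-- Partial product of the Euler function: `λ_k(q) = ∏_{i=1}^k (1 - q^i)`, with `λ_0(q) = 1`. -/
noncomputable def eulerLam (q : ℝ) (k : ℕ) : ℝ := ∏ i ∈ Finset.range k, (1 - q ^ (i + 1))

/-- The Euler function `κ(q) = ∏_{i=1}^∞ (1 - q^i)`. -/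
noncomputable def eulerKappa (q : ℝ) : ℝ := ∏' i : ℕ, (1 - q ^ (i + 1))

/-- The tail product `μ_n(q) = ∏_{i=n}^∞ (1 - q^i)`. -/
noncomputable def eulerMu (q : ℝ) (n : ℕ) : ℝ := ∏' i : ℕ, (1 - q ^ (n + i))

/-- The offset `b_n(q) = Σ_{k=1}^n λ_{k-1}(q) λ_{n-k}(q) - n κ(q)²`, the expected number of
posts in a random graph order on `n` elements minus `n κ(q)²`. -/
noncomputable def postOffset (q : ℝ) (n : ℕ) : ℝ :=
  (∑ k ∈ Finset.Icc 1 n, eulerLam q (k - 1) * eulerLam q (n - k)) - n * eulerKappa q ^ 2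

/-!
As `λ_k` decreases to `κ`, the product `(λ_a - κ)(λ_b - κ)` is nonnegative, i.e.
`λ_a λ_b - κ² ≥ κ(λ_a - κ) + κ(λ_b - κ)`. Summing over `a + b = n - 1` gives
`b_n ≥ 2κ Σ_{k<n} (λ_k - κ)`, and dropping the nonnegative terms with `k ≥ ⌊n/2⌋` gives the
finite bound. The tail estimate `λ_k - κ ≤ q^k / (1 - q)` makes the series summable, so the bound
passes to the limit.
-/

open Filter Finset

lemma sub_mul_sub_le_mul_sub_sq {R : Type*} [CommRing R] [PartialOrder R] [IsOrderedRing R]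
    {a b c : R} (ha : c ≤ a) (hb : c ≤ b) :
    c * (a - c) + c * (b - c) ≤ a * b - c ^ 2 := by
  have h : a * b - c ^ 2 - (c * (a - c) + c * (b - c)) = (a - c) * (b - c) := by ring
  exact sub_nonneg.1 (h ▸ mul_nonneg (sub_nonneg.2 ha) (sub_nonneg.2 hb))

section EulerProducts

variable {q : ℝ}

lemma eulerLam_succ (q : ℝ) (k : ℕ) : eulerLam q (k + 1) = eulerLam q k * (1 - q ^ (k + 1)) :=
  prod_range_succ _ _

lemma one_sub_pow_succ_pos (hq0 : 0 ≤ q) (hq1 : q < 1) (i : ℕ) : 0 < 1 - q ^ (i + 1) :=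
  sub_pos.2 (pow_lt_one₀ hq0 hq1 i.succ_ne_zero)

lemma eulerLam_pos (hq0 : 0 ≤ q) (hq1 : q < 1) (k : ℕ) : 0 < eulerLam q k :=
  prod_pos fun i _ => one_sub_pow_succ_pos hq0 hq1 i

lemma eulerLam_le_one (hq0 : 0 ≤ q) (hq1 : q < 1) (k : ℕ) : eulerLam q k ≤ 1 :=
  prod_le_one (fun i _ => (one_sub_pow_succ_pos hq0 hq1 i).le)
    (fun _ _ => sub_le_self _ (pow_nonneg hq0 _))

lemma eulerLam_sub_eulerLam_succ (q : ℝ) (k : ℕ) :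
    eulerLam q k - eulerLam q (k + 1) = eulerLam q k * q ^ (k + 1) := by
  rw [eulerLam_succ]; ring

lemma eulerLam_sub_eulerLam_succ_le (hq0 : 0 ≤ q) (hq1 : q < 1) (k : ℕ) :
    eulerLam q k - eulerLam q (k + 1) ≤ q ^ k := by
  rw [eulerLam_sub_eulerLam_succ]
  calc eulerLam q k * q ^ (k + 1) ≤ 1 * q ^ (k + 1) :=
        mul_le_mul_of_nonneg_right (eulerLam_le_one hq0 hq1 k) (pow_nonneg hq0 _)
    _ ≤ q ^ k := by rw [one_mul]; exact pow_le_pow_of_le_one hq0 hq1.le k.le_succ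

lemma eulerLam_antitone (hq0 : 0 ≤ q) (hq1 : q < 1) : Antitone (eulerLam q) :=
  antitone_nat_of_succ_le fun k => by
    rw [← sub_nonneg, eulerLam_sub_eulerLam_succ]
    exact mul_nonneg (eulerLam_pos hq0 hq1 k).le (pow_nonneg hq0 _)

lemma eulerLam_sub_eulerLam_le (hq0 : 0 ≤ q) (hq1 : q < 1) {k m : ℕ} (hkm : k ≤ m) :
    eulerLam q k - eulerLam q m ≤ q ^ k / (1 - q) := by
  refine le_trans ?_ (geom_sum_Ico_le_of_lt_one hq0 hq1 (n := m))
  induction m, hkm using Nat.le_induction with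
  | base => simp
  | succ m hkm ih =>
    rw [sum_Ico_succ_top hkm]
    linarith [eulerLam_sub_eulerLam_succ_le hq0 hq1 m]

lemma multipliable_one_sub_pow_succ (hq : |q| < 1) :
    Multipliable fun i : ℕ => 1 - q ^ (i + 1) := by
  simpa only [sub_eq_add_neg, pow_succ'] using Real.multipliable_one_add_of_summable
    ((summable_geometric_of_abs_lt_one hq).mul_left q).neg

lemma tendsto_eulerLam (hq : |q| < 1) : Tendsto (eulerLam q) atTop (nhds (eulerKappa q)) :=
  (multipliable_one_sub_pow_succ hq).tendsto_prod_tprod_nat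

lemma eulerKappa_le_eulerLam (hq0 : 0 ≤ q) (hq1 : q < 1) (k : ℕ) :
    eulerKappa q ≤ eulerLam q k :=
  (eulerLam_antitone hq0 hq1).le_of_tendsto
    (tendsto_eulerLam (by rwa [abs_of_nonneg hq0])) k

lemma eulerKappa_nonneg (hq0 : 0 ≤ q) (hq1 : q < 1) : 0 ≤ eulerKappa q :=
  ge_of_tendsto' (tendsto_eulerLam (by rwa [abs_of_nonneg hq0]))
    fun k => (eulerLam_pos hq0 hq1 k).le

lemma eulerLam_sub_eulerKappa_le (hq0 : 0 ≤ q) (hq1 : q < 1) (k : ℕ) :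
    eulerLam q k - eulerKappa q ≤ q ^ k / (1 - q) :=
  le_of_tendsto ((tendsto_eulerLam (by rwa [abs_of_nonneg hq0])).const_sub _)
    ((eventually_ge_atTop k).mono fun _ hkm => eulerLam_sub_eulerLam_le hq0 hq1 hkm)

lemma summable_eulerLam_sub_eulerKappa (hq0 : 0 ≤ q) (hq1 : q < 1) :
    Summable fun k => eulerLam q k - eulerKappa q :=
  ((summable_geometric_of_lt_one hq0 hq1).div_const (1 - q)).of_nonneg_of_le
    (fun k => sub_nonneg.2 (eulerKappa_le_eulerLam hq0 hq1 k))
    (eulerLam_sub_eulerKappa_le hq0 hq1)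

end EulerProducts

lemma postOffset_eq_sum_range (q : ℝ) (n : ℕ) :
    postOffset q n =
      ∑ k ∈ range n, (eulerLam q k * eulerLam q (n - 1 - k) - eulerKappa q ^ 2) := by
  rw [postOffset, ← Ico_add_one_right_eq_Icc, sum_Ico_eq_sum_range, sum_sub_distrib, sum_const,
    card_range, nsmul_eq_mul, Nat.add_sub_cancel]
  simp only [add_tsub_cancel_left, Nat.sub_sub]

lemma two_mul_eulerKappa_sum_le_postOffset {q : ℝ} (hq0 : 0 ≤ q) (hq1 : q < 1) (n : ℕ) :
    2 * eulerKappa q * ∑ k ∈ range n, (eulerLam q k - eulerKappa q) ≤ postOffset q n := by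
  set κ := eulerKappa q
  have hκ := eulerKappa_le_eulerLam hq0 hq1
  calc 2 * κ * ∑ k ∈ range n, (eulerLam q k - κ)
      = ∑ k ∈ range n, (κ * (eulerLam q k - κ) + κ * (eulerLam q (n - 1 - k) - κ)) := by
        rw [sum_add_distrib, ← mul_sum, ← mul_sum,
          sum_range_reflect (fun k => eulerLam q k - κ) n]
        ring
    _ ≤ postOffset q n := by
        rw [postOffset_eq_sum_range]
        exact sum_le_sum fun k _ => sub_mul_sub_le_mul_sub_sq (hκ k) (hκ _)

/-- For all `0 < q < 1` and every integer `n ≥ 2`, with `H = ⌊n/2⌋`,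
`b_n(q) ≥ 2κ(q)·Σ_{k=0}^{H-1}(λ_k(q) - κ(q))`; consequently the limit
`b(q) = lim_{n→∞} b_n(q)` satisfies `b(q) ≥ 2κ(q)·Σ_{k=0}^∞ (λ_k(q) - κ(q))`. -/
theorem postOffset_ge_partial (q : ℝ) (hq0 : 0 < q) (hq1 : q < 1) :
    (∀ n : ℕ, 2 ≤ n →
      2 * eulerKappa q * ∑ k ∈ Finset.range (n / 2), (eulerLam q k - eulerKappa q) ≤
        postOffset q n) ∧
    ∀ L : ℝ, Filter.Tendsto (fun n : ℕ => postOffset q n) Filter.atTop (nhds L) →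
      2 * eulerKappa q * ∑' k : ℕ, (eulerLam q k - eulerKappa q) ≤ L := by
  have hpartial (n : ℕ) :
      2 * eulerKappa q * ∑ k ∈ range (n / 2), (eulerLam q k - eulerKappa q) ≤ postOffset q n := by
    refine le_trans ?_ (two_mul_eulerKappa_sum_le_postOffset hq0.le hq1 n)
    refine mul_le_mul_of_nonneg_left ?_ (mul_nonneg zero_le_two (eulerKappa_nonneg hq0.le hq1))
    exact sum_le_sum_of_subset_of_nonneg (range_subset_range.2 (Nat.div_le_self n 2))
      fun k _ _ => sub_nonneg.2 (eulerKappa_le_eulerLam hq0.le hq1 k)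
  refine ⟨fun n _ => hpartial n, fun L hL => le_of_tendsto_of_tendsto' ?_ hL hpartial⟩
  exact ((summable_eulerLam_sub_eulerKappa hq0.le hq1).tendsto_sum_tsum_nat.comp
    (Nat.tendsto_div_const_atTop two_ne_zero)).const_mul _
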